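/- arXiv:2311.08114 — 2 statements merged into one kernel-verified Lean document; each statement's English description precedes it below -/
import Mathlib

section
/- For D ⊆ B(z, ε) ⊂ ℝ³ with |D| ≥ c ε³ for some constant c > 0 independent of ε, the averaged geometric constant A_{∂D} := (1/|∂D|) ∫_{∂D} ∫_D |x-y|^{-1} dx dS_y satisfies c₁ ε² ≤ A_{∂D} ≤ c₂ ε² for constants c₁, c₂ > 0 independent of ε. -/
/-!
Every boundary point `y` of `D ⊆ B(z, ε)` lies in the closed ball `B̄(z, ε)`, so
`D ⊆ B(y, 2ε)`. Hence the kernel `|x - y|⁻¹` is at least `(2ε)⁻¹` on `D`, giving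
`A(y) ≥ |D| / (2ε) ≥ (c / 2) ε²`; and `A(y)` is at most the integral of the kernel over
`B(y, 2ε)`, which by translation and scaling equals `(2ε)² ∫_{B(0,1)} |x|⁻¹ dx`, finite in
dimension three. Both bounds hold pointwise on `∂D`, so they pass to the average.
-/

open MeasureTheory Real Set

local notation "E3" => EuclideanSpace ℝ (Fin 3)

open Metric Module

lemma subset_ball_two_mul_of_mem_closure {X : Type*} [PseudoMetricSpace X] {D : Set X} {z y : X}
    {ε : ℝ} (hD : D ⊆ ball z ε) (hy : y ∈ closure D) : D ⊆ ball y (2 * ε) := by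
  have hyz : dist y z ≤ ε := closure_ball_subset_closedBall (closure_mono hD hy)
  exact hD.trans (ball_subset_ball' (by rw [dist_comm]; linarith))

lemma average_mem_Icc_of_ae {Ω : Type*} [MeasurableSpace Ω] {ν : Measure Ω} [IsFiniteMeasure ν]
    [NeZero ν] {f : Ω → ℝ} {a b : ℝ} (hf : AEStronglyMeasurable f ν)
    (hab : ∀ᵐ y ∂ν, f y ∈ Icc a b) : ⨍ y, f y ∂ν ∈ Icc a b := by
  refine (convex_Icc a b).average_mem isClosed_Icc hab (.of_bound hf (max |a| |b|) ?_)
  filter_upwards [hab] with y hy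
  exact abs_le_max_abs_abs hy.1 hy.2

section NewtonianPotential

variable {E : Type*} [NormedAddCommGroup E]

lemma preimage_sub_right_ball (y : E) (R : ℝ) : (· - y) ⁻¹' ball (0 : E) R = ball y R := by
  ext x
  simp [dist_eq_norm]

variable [MeasurableSpace E]

noncomputable def newtonianPotential (μ : Measure E) (D : Set E) (y : E) : ℝ :=
  ∫ x in D, ‖x - y‖⁻¹ ∂μ

variable [NormedSpace ℝ E] [FiniteDimensional ℝ E] [BorelSpace E]

lemma stronglyMeasurable_newtonianPotential (μ : Measure E) [SFinite μ] (D : Set E) :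
    StronglyMeasurable (newtonianPotential μ D) :=
  (measurable_snd.sub measurable_fst).norm.inv.stronglyMeasurable.integral_prod_right'

variable {μ : Measure E} [μ.IsAddHaarMeasure]

lemma integrableOn_ball_inv_norm_sub (hd : 1 < finrank ℝ E) (y : E) (R : ℝ) :
    IntegrableOn (fun x ↦ ‖x - y‖⁻¹) (ball y R) μ := by
  have h₀ : IntegrableOn (fun x : E ↦ ‖x‖⁻¹) (ball 0 R) μ :=
    integrableOn_ball_of_norm_le_rpow hd.le (C := 1) (α := 1) (by exact_mod_cast hd)
      (ae_of_all _ fun x ↦ by simp [Real.rpow_neg_one]) (by fun_prop)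
  rw [← (measurePreserving_sub_right μ y).integrableOn_comp_preimage
    (measurableEmbedding_subRight y), preimage_sub_right_ball] at h₀
  exact h₀

lemma setIntegral_ball_inv_norm_sub (y : E) {R : ℝ} (hR : 0 < R) :
    ∫ x in ball y R, ‖x - y‖⁻¹ ∂μ = R ^ finrank ℝ E / R * ∫ x in ball 0 1, ‖x‖⁻¹ ∂μ := by
  have htranslate : ∫ x in ball y R, ‖x - y‖⁻¹ ∂μ = ∫ x in ball 0 R, ‖x‖⁻¹ ∂μ := by
    rw [← preimage_sub_right_ball y R]
    exact (measurePreserving_sub_right μ y).setIntegral_preimage_emb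
      (measurableEmbedding_subRight y) (fun x ↦ ‖x‖⁻¹) (ball 0 R)
  have hscale := Measure.setIntegral_comp_smul_of_pos μ (fun x ↦ ‖x‖⁻¹) (ball 0 1) hR
  simp only [smul_unitBall_of_pos hR, norm_smul, Real.norm_of_nonneg hR.le, mul_inv,
    integral_const_mul, smul_eq_mul] at hscale
  rw [eq_inv_mul_iff_mul_eq₀ (by positivity)] at hscale
  rw [htranslate, ← hscale]
  field_simp

lemma newtonianPotential_le_of_subset_ball (hd : 1 < finrank ℝ E) {D : Set E} {y : E} {R : ℝ}
    (hR : 0 < R) (hD : D ⊆ ball y R) :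
    newtonianPotential μ D y ≤ R ^ finrank ℝ E / R * ∫ x in ball 0 1, ‖x‖⁻¹ ∂μ := by
  rw [← setIntegral_ball_inv_norm_sub y hR]
  exact setIntegral_mono_set (integrableOn_ball_inv_norm_sub hd y R)
    (ae_of_all _ fun _ ↦ inv_nonneg.2 (norm_nonneg _)) hD.eventuallyLE

lemma measureReal_div_le_newtonianPotential (hd : 1 < finrank ℝ E) {D : Set E} {y : E} {R : ℝ}
    (hD : D ⊆ ball y R) : μ.real D / R ≤ newtonianPotential μ D y := by
  have : Nontrivial E := nontrivial_of_finrank_pos (R := ℝ) (by omega)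
  have hkernel : ∀ᵐ x ∂μ.restrict D, R⁻¹ ≤ ‖x - y‖⁻¹ := by
    filter_upwards [ae_restrict_of_ae (μ.ae_ne y),
      ae_restrict_of_ae_restrict_of_subset hD (ae_restrict_mem measurableSet_ball)] with x hxy hx
    exact inv_anti₀ (norm_pos_iff.2 (sub_ne_zero.2 hxy)) (mem_ball_iff_norm.1 hx).le
  calc μ.real D / R = ∫ _ in D, R⁻¹ ∂μ := by rw [setIntegral_const, smul_eq_mul, div_eq_mul_inv]
    _ ≤ newtonianPotential μ D y :=
      integral_mono_ae (integrableOn_const ((measure_mono hD).trans_lt measure_ball_lt_top).ne)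
        ((integrableOn_ball_inv_norm_sub hd y R).mono_set hD) hkernel

end NewtonianPotential

theorem stmt4 (c : ℝ) (hc : 0 < c) :
    ∃ c₁ > (0:ℝ), ∃ c₂ > (0:ℝ), ∀ (ε : ℝ), 0 < ε →
      ∀ (z : E3) (D : Set E3) (ν : Measure E3) (_ : IsFiniteMeasure ν),
      MeasurableSet D →
      D ⊆ Metric.ball z ε →
      c * ε ^ 3 ≤ (volume D).toReal →
      ν ≠ 0 →
      (∀ᵐ y ∂ν, y ∈ frontier D) →
      (c₁ * ε ^ 2 ≤
          (ν Set.univ).toReal⁻¹ * ∫ y, (∫ x in D, 1 / ‖x - y‖) ∂ν) ∧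
      ((ν Set.univ).toReal⁻¹ * ∫ y, (∫ x in D, 1 / ‖x - y‖) ∂ν
          ≤ c₂ * ε ^ 2) := by
  set I := ∫ x in ball (0 : E3) 1, ‖x‖⁻¹
  have hI : 0 ≤ I := integral_nonneg fun _ ↦ inv_nonneg.2 (norm_nonneg _)
  refine ⟨c / 2, by positivity, 4 * I + 1, by positivity, fun ε hε z D ν _ _ hDz hvol hν hfr ↦ ?_⟩
  have hdim : finrank ℝ E3 = 3 := finrank_euclideanSpace_fin
  have hbounds : ∀ᵐ y ∂ν,
      newtonianPotential volume D y ∈ Icc (c / 2 * ε ^ 2) ((4 * I + 1) * ε ^ 2) := by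
    filter_upwards [hfr] with y hy
    have hDy := subset_ball_two_mul_of_mem_closure hDz (frontier_subset_closure hy)
    constructor
    · calc c / 2 * ε ^ 2 ≤ volume.real D / (2 * ε) := by
            rw [le_div_iff₀ (by positivity)]; simp only [measureReal_def]; nlinarith
        _ ≤ _ := measureReal_div_le_newtonianPotential (by omega) hDy
    · calc _ ≤ (2 * ε) ^ 3 / (2 * ε) * I := by
            simpa only [hdim] using
              newtonianPotential_le_of_subset_ball (by omega) (by positivity) hDy
        _ ≤ _ := by field_simp; nlinarith
  have : NeZero ν := ⟨hν⟩
  have hmean := average_mem_Icc_of_ae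
    (stronglyMeasurable_newtonianPotential volume D).aestronglyMeasurable hbounds
  simpa only [average_eq, newtonianPotential, one_div, measureReal_def, smul_eq_mul, mem_Icc]
    using hmean
end

section
/- Let B(m,n) = ∫_{ℝ³} ρ⁻¹(x) ∇m·∇n̄ dx + s² ∫_{ℝ³} k⁻¹(x) m n̄ dx be the sesquilinear form with s = σ + iμ, σ > 0, and ρ, k bounded positive functions bounded away from 0. Then Re(B(m, s·m)) ≥ c σ min{1, σ²} ‖m‖²_{H¹(ℝ³)} for all m ∈ H¹(ℝ³), with c > 0 depending only on the bounds for ρ and k. -/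
open MeasureTheory Real Set Complex

local notation "E3" => EuclideanSpace ℝ (Fin 3)

/-! With `s = σ + iμ`, the real part of `s̄ ∫ ρ⁻¹ |∇m|² + s |s|² ∫ k⁻¹ |m|²` is
`σ (∫ ρ⁻¹ |∇m|² + |s|² ∫ k⁻¹ |m|²)`. Since `ρ, k ≤ c`, the weighted integrals dominate
`c⁻¹` times the unweighted ones, and `|s|² ≥ σ² ≥ min 1 σ²` gives the bound with `C = c⁻¹`. -/

theorem inv_mul_integral_le_integral_inv_mul {α : Type*} [MeasurableSpace α] {μ : Measure α}
    {f g : α → ℝ} {c : ℝ} (hf : 0 ≤ f) (hg_pos : ∀ x, 0 < g x) (hg_le : ∀ x, g x ≤ c)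
    (hi : Integrable (fun x => (g x)⁻¹ * f x) μ) :
    c⁻¹ * ∫ x, f x ∂μ ≤ ∫ x, (g x)⁻¹ * f x ∂μ := by
  rw [← integral_const_mul]
  refine integral_mono_of_nonneg (ae_of_all _ fun x => ?_) hi (ae_of_all _ fun x => ?_)
  · exact mul_nonneg (inv_nonneg.2 ((hg_pos x).trans_le (hg_le x)).le) (hf x)
  · exact mul_le_mul_of_nonneg_right (inv_anti₀ (hg_pos x) (hg_le x)) (hf x)

theorem re_conj_mul_add_mul_norm_sq_mul (s : ℂ) (a b : ℝ) :
    ((starRingEnd ℂ) s * a + s * ((‖s‖ : ℝ) : ℂ) ^ 2 * b).re = s.re * (a + ‖s‖ ^ 2 * b) := by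
  simp only [add_re, mul_re, conj_re, conj_im, ofReal_re, ofReal_im, ← ofReal_pow]
  ring

theorem stmt14 (c : ℝ) (hc : 1 ≤ c) :
    ∃ C > (0:ℝ), ∀ (σ μ : ℝ), 0 < σ →
      ∀ (ρ k : E3 → ℝ),
      (∀ x, c⁻¹ ≤ ρ x ∧ ρ x ≤ c) →
      (∀ x, c⁻¹ ≤ k x ∧ k x ≤ c) →
      ∀ (m : E3 → ℂ),
      Integrable (fun x : E3 => ‖fderiv ℝ m x‖ ^ 2) →
      Integrable (fun x : E3 => ‖m x‖ ^ 2) →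
      Integrable (fun x : E3 => (ρ x)⁻¹ * ‖fderiv ℝ m x‖ ^ 2) →
      Integrable (fun x : E3 => (k x)⁻¹ * ‖m x‖ ^ 2) →
      C * σ * min 1 (σ ^ 2) * ((∫ x : E3, ‖fderiv ℝ m x‖ ^ 2) + ∫ x : E3, ‖m x‖ ^ 2)
        ≤ ((starRingEnd ℂ) ((σ : ℂ) + (μ : ℂ) * Complex.I)
              * ((∫ x : E3, (ρ x)⁻¹ * ‖fderiv ℝ m x‖ ^ 2 : ℝ) : ℂ)
            + ((σ : ℂ) + (μ : ℂ) * Complex.I)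
              * ((‖(σ : ℂ) + (μ : ℂ) * Complex.I‖ : ℝ) : ℂ) ^ 2
              * ((∫ x : E3, (k x)⁻¹ * ‖m x‖ ^ 2 : ℝ) : ℂ)).re := by
  have hc_inv : 0 < c⁻¹ := inv_pos.2 (one_pos.trans_le hc)
  refine ⟨c⁻¹, hc_inv, fun σ μ hσ ρ k hρ hk m _ _ hρm hkm => ?_⟩
  set s : ℂ := σ + μ * I
  have hs_re : s.re = σ := by simp [s]
  rw [re_conj_mul_add_mul_norm_sq_mul, hs_re]
  have hσs : σ ^ 2 ≤ ‖s‖ ^ 2 := pow_le_pow_left₀ hσ.le (hs_re ▸ re_le_norm s) 2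
  have hgrad := inv_mul_integral_le_integral_inv_mul (fun x => by positivity)
    (fun x => hc_inv.trans_le (hρ x).1) (fun x => (hρ x).2) hρm
  have hval := inv_mul_integral_le_integral_inv_mul (fun x => by positivity)
    (fun x => hc_inv.trans_le (hk x).1) (fun x => (hk x).2) hkm
  have hmin : 0 ≤ min 1 (σ ^ 2) := le_min zero_le_one (sq_nonneg σ)
  calc c⁻¹ * σ * min 1 (σ ^ 2) * ((∫ x, ‖fderiv ℝ m x‖ ^ 2) + ∫ x, ‖m x‖ ^ 2)
      = σ * (min 1 (σ ^ 2) * (c⁻¹ * ∫ x, ‖fderiv ℝ m x‖ ^ 2)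
          + min 1 (σ ^ 2) * (c⁻¹ * ∫ x, ‖m x‖ ^ 2)) := by ring
    _ ≤ σ * (1 * (∫ x, (ρ x)⁻¹ * ‖fderiv ℝ m x‖ ^ 2)
          + σ ^ 2 * ∫ x, (k x)⁻¹ * ‖m x‖ ^ 2) := by
        gcongr
        · exact min_le_left _ _
        · exact min_le_right _ _
    _ ≤ σ * ((∫ x, (ρ x)⁻¹ * ‖fderiv ℝ m x‖ ^ 2) + ‖s‖ ^ 2 * ∫ x, (k x)⁻¹ * ‖m x‖ ^ 2) := by
        rw [one_mul]
        gcongr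
        exact integral_nonneg fun x => mul_nonneg (inv_nonneg.2 (hc_inv.trans_le (hk x).1).le)
          (sq_nonneg _)
end
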